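/- Let Ω ⊆ ℝ³ be open and let u : Ω → ℝ be smooth and harmonic with u(x) < 1 and ∇u(x) ≠ 0 for every x ∈ Ω. Define the vector field X := ∇u/(1−u) + ∇|∇u|/(1−u)² + (|∇u|/(1−u)³)·∇u on Ω. Then at every point of Ω: div X = (|∇u|/(1−u)²)·[ |∇u| + 3|∇u|²/(1−u)² + 3⟨∇u, ∇|∇u|⟩/((1−u)·|∇u|) + (‖D²u‖² − |∇|∇u||²)/|∇u|² ]. -/

import Mathlib

noncomputable section

open scoped RealInnerProductSpace

abbrev E3 : Type := EuclideanSpace ℝ (Fin 3)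

/-- Hessian of `u` at `x`, viewed as a continuous linear map `v ↦ D²u(x)·v`. -/
noncomputable def hess (u : E3 → ℝ) (x : E3) : E3 →L[ℝ] E3 :=
  fderiv ℝ (gradient u) x

/-- Laplacian of `u` at `x`: the trace of the Hessian. -/
noncomputable def lap (u : E3 → ℝ) (x : E3) : ℝ :=
  LinearMap.trace ℝ E3 (hess u x : E3 →ₗ[ℝ] E3)

/-- Divergence of a vector field `X` at `x`: the trace of its derivative. -/
noncomputable def vdiv (X : E3 → E3) (x : E3) : ℝ :=
  LinearMap.trace ℝ E3 (fderiv ℝ X x : E3 →ₗ[ℝ] E3)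

/-- Squared Frobenius (Hilbert–Schmidt) norm of a linear map on `ℝ³`. -/
noncomputable def frobSq (A : E3 →L[ℝ] E3) : ℝ :=
  ∑ i : Fin 3, ‖A (EuclideanSpace.basisFun (Fin 3) ℝ i)‖ ^ 2

open InnerProductSpace

/-- The inverse of `toDual` as a genuinely `ℝ`-linear continuous map. -/
noncomputable def dualIso : (E3 →L[ℝ] ℝ) →L[ℝ] E3 :=
  LinearMap.toContinuousLinearMap
    { toFun := fun L => (toDual ℝ E3).symm L
      map_add' := fun a b => by simp
      map_smul' := fun c a => by simp }

lemma dualIso_apply (L : E3 →L[ℝ] ℝ) : dualIso L = (toDual ℝ E3).symm L := rfl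

lemma gradEq (u : E3 → ℝ) : gradient u = fun y => dualIso (fderiv ℝ u y) := rfl

lemma traceCLM_eq (A : E3 →L[ℝ] E3) :
    LinearMap.trace ℝ E3 (A : E3 →ₗ[ℝ] E3)
      = ∑ i : Fin 3, ⟪A (EuclideanSpace.basisFun (Fin 3) ℝ i),
          EuclideanSpace.basisFun (Fin 3) ℝ i⟫ := by
  classical
  rw [LinearMap.trace_eq_matrix_trace ℝ (EuclideanSpace.basisFun (Fin 3) ℝ).toBasis]
  rw [Matrix.trace]
  refine Finset.sum_congr rfl fun i _ => ?_
  rw [Matrix.diag_apply, LinearMap.toMatrix_apply]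
  simp [OrthonormalBasis.coe_toBasis_repr_apply, EuclideanSpace.basisFun_repr,
    EuclideanSpace.basisFun_apply, EuclideanSpace.inner_single_right, real_inner_comm]

lemma trace_smulRight_toDual (a b : E3) :
    LinearMap.trace ℝ E3 ((((toDual ℝ E3) a).smulRight b : E3 →L[ℝ] E3) : E3 →ₗ[ℝ] E3)
      = ⟪a, b⟫ := by
  rw [traceCLM_eq]
  simp only [ContinuousLinearMap.smulRight_apply, toDual_apply_apply, real_inner_smul_left]
  have := (EuclideanSpace.basisFun (Fin 3) ℝ).sum_inner_mul_inner a b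
  simpa [real_inner_comm] using this

set_option maxHeartbeats 2000000

theorem div_X_bochner_form (Ω : Set E3) (hΩ : IsOpen Ω) (u : E3 → ℝ)
    (hu : ContDiffOn ℝ (⊤ : ℕ∞) u Ω)
    (hharm : ∀ x ∈ Ω, lap u x = 0)
    (hu1 : ∀ x ∈ Ω, u x < 1)
    (hgrad : ∀ x ∈ Ω, gradient u x ≠ 0)
    (X : E3 → E3)
    (hX : ∀ x ∈ Ω, X x =
      (1 - u x)⁻¹ • gradient u x
        + ((1 - u x) ^ 2)⁻¹ • gradient (fun y => ‖gradient u y‖) x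
        + (‖gradient u x‖ / (1 - u x) ^ 3) • gradient u x) :
    ∀ x ∈ Ω, vdiv X x =
      ‖gradient u x‖ / (1 - u x) ^ 2 *
        (‖gradient u x‖
          + 3 * ‖gradient u x‖ ^ 2 / (1 - u x) ^ 2
          + 3 * ⟪gradient u x, gradient (fun y => ‖gradient u y‖) x⟫
              / ((1 - u x) * ‖gradient u x‖)
          + (frobSq (hess u x) - ‖gradient (fun y => ‖gradient u y‖) x‖ ^ 2)
              / ‖gradient u x‖ ^ 2) := by
  intro x hx
  classical
  have hΩx : Ω ∈ nhds x := hΩ.mem_nhds hx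
  set g : E3 → E3 := gradient u with hg_def
  set f : E3 → ℝ := fun y => ‖g y‖ with hf_def
  -- basic smoothness facts
  have hu_cd : ∀ y ∈ Ω, ContDiffAt ℝ (⊤ : ℕ∞) u y := fun y hy => hu.contDiffAt (hΩ.mem_nhds hy)
  have hg_cd : ∀ y ∈ Ω, ContDiffAt ℝ (⊤ : ℕ∞) g y := by
    intro y hy
    have h1 : ContDiffAt ℝ (⊤ : ℕ∞) (fderiv ℝ u) y := (hu_cd y hy).fderiv_right (by simp)
    rw [hg_def, gradEq]
    exact ContDiff.comp_contDiffAt y dualIso.contDiff h1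
  have hgd : ∀ y ∈ Ω, HasFDerivAt g (fderiv ℝ g y) y := fun y hy =>
    ((hg_cd y hy).differentiableAt (by simp)).hasFDerivAt
  -- symmetry of the Hessian on Ω
  have hsymm : ∀ y ∈ Ω, ∀ v w : E3, ⟪fderiv ℝ g y v, w⟫ = ⟪fderiv ℝ g y w, v⟫ := by
    intro y hy v w
    have hsym := ((hu_cd y hy).isSymmSndFDerivAt (by simp; exact WithTop.coe_le_coe.mpr (le_top : ((2 : ℕ∞)) ≤ ⊤))).eq v w
    have h1 : DifferentiableAt ℝ (fderiv ℝ u) y :=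
      ((hu_cd y hy).fderiv_right (m := (⊤ : ℕ∞)) (by simp)).differentiableAt (by simp)
    have hco : fderiv ℝ g y = dualIso.comp (fderiv ℝ (fderiv ℝ u) y) := by
      have hD : HasFDerivAt (fderiv ℝ u) (fderiv ℝ (fderiv ℝ u) y) y := h1.hasFDerivAt
      have h2 := (dualIso.hasFDerivAt.comp y hD).fderiv
      have h3 : (dualIso ∘ fderiv ℝ u) = g := rfl
      rw [h3] at h2
      exact h2
    rw [hco]
    simp only [ContinuousLinearMap.comp_apply, dualIso_apply]
    rw [toDual_symm_apply, toDual_symm_apply, hsym]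
  -- the gradient of f on Ω where g ≠ 0
  have hfd : ∀ y ∈ Ω, g y ≠ 0 → HasGradientAt f ((f y)⁻¹ • fderiv ℝ g y (g y)) y := by
    intro y hy hgy
    have hq : HasFDerivAt (fun z => ⟪g z, g z⟫)
        ((fderivInnerCLM ℝ (g y, g y)).comp ((fderiv ℝ g y).prod (fderiv ℝ g y))) y :=
      HasFDerivAt.inner ℝ (hgd y hy) (hgd y hy)
    have hq0 : ⟪g y, g y⟫ ≠ 0 := by
      rw [real_inner_self_eq_norm_sq]
      exact pow_ne_zero 2 (norm_ne_zero_iff.mpr hgy)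
    have hs := hq.sqrt hq0
    have hfun : (fun z => Real.sqrt ⟪g z, g z⟫) = f := by
      funext z
      rw [hf_def]
      exact (norm_eq_sqrt_real_inner (g z)).symm
    rw [hfun] at hs
    rw [hasGradientAt_iff_hasFDerivAt]
    have heq : (toDual ℝ E3) ((f y)⁻¹ • fderiv ℝ g y (g y))
        = (1 / (2 * Real.sqrt ⟪g y, g y⟫)) •
            ((fderivInnerCLM ℝ (g y, g y)).comp ((fderiv ℝ g y).prod (fderiv ℝ g y))) := by
      ext v
      simp only [toDual_apply_apply, ContinuousLinearMap.smul_apply, ContinuousLinearMap.comp_apply,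
        ContinuousLinearMap.prod_apply, fderivInnerCLM_apply, smul_eq_mul]
      rw [real_inner_smul_left]
      have h1 : Real.sqrt ⟪g y, g y⟫ = f y := by
        rw [← norm_eq_sqrt_real_inner]
      have h2 : ⟪fderiv ℝ g y (g y), v⟫ = ⟪g y, fderiv ℝ g y v⟫ := by
        rw [hsymm y hy (g y) v]
        exact real_inner_comm _ _
      rw [h1, h2, real_inner_comm (fderiv ℝ g y v) (g y)]
      have hfy : f y ≠ 0 := norm_ne_zero_iff.mpr hgy
      field_simp
      ring
    rw [heq]
    exact hs
  -- data at the point x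
  have hgx : g x ≠ 0 := hgrad x hx
  have hfx : f x ≠ 0 := norm_ne_zero_iff.mpr hgx
  have hw : (1 : ℝ) - u x ≠ 0 := by have := hu1 x hx; linarith
  have hgcont : ContinuousAt g x := (hg_cd x hx).continuousAt
  have hEv : ∀ᶠ y in nhds x, y ∈ Ω ∧ g y ≠ 0 := by
    filter_upwards [hΩx, hgcont.eventually_ne hgx] with y h1 h2
    exact ⟨h1, h2⟩
  have hgrad_f_eq : gradient f =ᶠ[nhds x] fun y => (f y)⁻¹ • fderiv ℝ g y (g y) := by
    filter_upwards [hEv] with y hy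
    exact (hfd y hy.1 hy.2).gradient
  set H : E3 →L[ℝ] E3 := fderiv ℝ g x with hH_def
  have hgdx : HasFDerivAt g H x := hgd x hx
  have hTd : HasFDerivAt (fderiv ℝ g) (fderiv ℝ (fderiv ℝ g) x) x :=
    (((hg_cd x hx).fderiv_right (m := (⊤ : ℕ∞)) (by simp)).differentiableAt (by simp)).hasFDerivAt
  set T := fderiv ℝ (fderiv ℝ g) x with hT_def
  have hTsymm : ∀ v w : E3, T v w = T w v := fun v w =>
    ((hg_cd x hx).isSymmSndFDerivAt (by simp; exact WithTop.coe_le_coe.mpr (le_top : ((2 : ℕ∞)) ≤ ⊤))).eq v w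
  set Gf : E3 := (f x)⁻¹ • H (g x) with hGf_def
  have hGf : gradient f x = Gf := (hfd x hx hgx).gradient
  have hdf : HasFDerivAt f ((toDual ℝ E3) Gf) x := (hfd x hx hgx).hasFDerivAt
  have hHgx : H (g x) = f x • Gf := by
    rw [hGf_def, smul_smul, mul_inv_cancel₀ hfx, one_smul]
  have hud : HasFDerivAt u ((toDual ℝ E3) (g x)) x := by
    have h := ((hu_cd x hx).differentiableAt (by simp)).hasFDerivAt
    rwa [show fderiv ℝ u x = (toDual ℝ E3) (g x) from ((toDual ℝ E3).apply_symm_apply _).symm] at h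
  have h1u : HasFDerivAt (fun y => 1 - u y) (-(toDual ℝ E3) (g x)) x := hud.const_sub 1
  -- coefficient derivatives
  have hc1 : HasFDerivAt (fun y => (1 - u y)⁻¹)
      ((((1 - u x) ^ 2)⁻¹) • (toDual ℝ E3) (g x)) x := by
    have h := (hasDerivAt_inv hw).comp_hasFDerivAt x h1u
    have he : (-((1 - u x) ^ 2)⁻¹) • (-(toDual ℝ E3) (g x))
        = (((1 - u x) ^ 2)⁻¹) • (toDual ℝ E3) (g x) := by
      rw [smul_neg, neg_smul, neg_neg]
    rw [he] at h
    exact h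
  have hc2 : HasFDerivAt (fun y => ((1 - u y) ^ 2)⁻¹)
      ((2 / (1 - u x) ^ 3) • (toDual ℝ E3) (g x)) x := by
    have hd : HasDerivAt (fun t : ℝ => (t ^ 2)⁻¹)
        (-(↑2 * (1 - u x) ^ (2 - 1)) / ((1 - u x) ^ 2) ^ 2) (1 - u x) :=
      (hasDerivAt_pow 2 (1 - u x)).inv (pow_ne_zero 2 hw)
    have h := hd.comp_hasFDerivAt x h1u
    have he : (-(↑2 * (1 - u x) ^ (2 - 1)) / ((1 - u x) ^ 2) ^ 2) • (-(toDual ℝ E3) (g x))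
        = (2 / (1 - u x) ^ 3) • (toDual ℝ E3) (g x) := by
      rw [smul_neg, ← neg_smul]
      congr 1
      field_simp
      ring
    rw [he] at h
    exact h
  have hc3 : HasFDerivAt (fun y => f y / (1 - u y) ^ 3)
      ((((1 - u x) ^ 3)⁻¹) • (toDual ℝ E3) Gf + (3 * f x / (1 - u x) ^ 4) • (toDual ℝ E3) (g x))
      x := by
    have hd : HasDerivAt (fun t : ℝ => (t ^ 3)⁻¹)
        (-(↑3 * (1 - u x) ^ (3 - 1)) / ((1 - u x) ^ 3) ^ 2) (1 - u x) :=
      (hasDerivAt_pow 3 (1 - u x)).inv (pow_ne_zero 3 hw)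
    have hinv3 : HasFDerivAt (fun y => ((1 - u y) ^ 3)⁻¹)
        ((-(3 * (1 - u x) ^ 2) / ((1 - u x) ^ 3) ^ 2) • -(toDual ℝ E3) (g x)) x := by
      have h := hd.comp_hasFDerivAt x h1u
      simpa [Function.comp_def] using h
    have hmul := hdf.mul hinv3
    have hfun : (fun y => f y / (1 - u y) ^ 3) = fun y => f y * ((1 - u y) ^ 3)⁻¹ := by
      funext y; rw [div_eq_mul_inv]
    rw [hfun]
    refine hmul.congr_fderiv ?_
    ext v
    simp only [ContinuousLinearMap.add_apply, ContinuousLinearMap.coe_smul', Pi.smul_apply,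
      ContinuousLinearMap.neg_apply, smul_eq_mul, mul_neg, neg_mul, neg_neg]
    field_simp
    ring
  -- derivative of the gradient of f
  have hA : HasFDerivAt (fun y => fderiv ℝ g y (g y)) (H.comp H + T.flip (g x)) x :=
    hTd.clm_apply hgdx
  have hinvf : HasFDerivAt (fun y => (f y)⁻¹) ((-((f x) ^ 2)⁻¹) • (toDual ℝ E3) Gf) x := by
    have h := (hasDerivAt_inv hfx).comp_hasFDerivAt x hdf
    exact h
  have hφ : HasFDerivAt (fun y => (f y)⁻¹ • fderiv ℝ g y (g y))
      ((f x)⁻¹ • (H.comp H + T.flip (g x))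
        + ((-((f x) ^ 2)⁻¹) • (toDual ℝ E3) Gf).smulRight (H (g x))) x := hinvf.smul hA
  have hgradf : HasFDerivAt (gradient f)
      ((f x)⁻¹ • (H.comp H + T.flip (g x))
        + ((-((f x) ^ 2)⁻¹) • (toDual ℝ E3) Gf).smulRight (H (g x))) x :=
    hφ.congr_of_eventuallyEq hgrad_f_eq
  -- the vector field near x
  have hY : HasFDerivAt
      (fun y => (1 - u y)⁻¹ • g y + ((1 - u y) ^ 2)⁻¹ • gradient f y
        + (‖g y‖ / (1 - u y) ^ 3) • g y)
      ((((1 - u x)⁻¹) • H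
          + ((((1 - u x) ^ 2)⁻¹) • (toDual ℝ E3) (g x)).smulRight (g x))
        + ((((1 - u x) ^ 2)⁻¹) • ((f x)⁻¹ • (H.comp H + T.flip (g x))
              + ((-((f x) ^ 2)⁻¹) • (toDual ℝ E3) Gf).smulRight (H (g x)))
            + ((2 / (1 - u x) ^ 3) • (toDual ℝ E3) (g x)).smulRight (gradient f x))
        + (((‖g x‖ / (1 - u x) ^ 3)) • H
            + ((((1 - u x) ^ 3)⁻¹) • (toDual ℝ E3) Gf
                + (3 * f x / (1 - u x) ^ 4) • (toDual ℝ E3) (g x)).smulRight (g x))) x :=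
    ((hc1.smul hgdx).add (hc2.smul hgradf)).add (hc3.smul hgdx)
  have hXY : X =ᶠ[nhds x] fun y => (1 - u y)⁻¹ • g y + ((1 - u y) ^ 2)⁻¹ • gradient f y
      + (‖g y‖ / (1 - u y) ^ 3) • g y := by
    filter_upwards [hΩx] with y hy
    exact hX y hy
  have hDX := hXY.fderiv_eq.trans hY.fderiv
  -- trace lemmas
  have tradd : ∀ A B : E3 →L[ℝ] E3,
      LinearMap.trace ℝ E3 ((A + B : E3 →L[ℝ] E3) : E3 →ₗ[ℝ] E3)
        = LinearMap.trace ℝ E3 (A : E3 →ₗ[ℝ] E3) + LinearMap.trace ℝ E3 (B : E3 →ₗ[ℝ] E3) := by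
    intro A B
    rw [ContinuousLinearMap.coe_add, map_add]
  have trsmul : ∀ (c : ℝ) (A : E3 →L[ℝ] E3),
      LinearMap.trace ℝ E3 ((c • A : E3 →L[ℝ] E3) : E3 →ₗ[ℝ] E3)
        = c * LinearMap.trace ℝ E3 (A : E3 →ₗ[ℝ] E3) := by
    intro c A
    rw [ContinuousLinearMap.coe_smul, map_smul, smul_eq_mul]
  have sm1 : ∀ (c : ℝ) (L : E3 →L[ℝ] ℝ) (b : E3),
      ((c • L).smulRight b : E3 →L[ℝ] E3) = c • (L.smulRight b) := by
    intro c L b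
    ext v
    simp [smul_smul, mul_assoc]
  have sm2 : ∀ (L₁ L₂ : E3 →L[ℝ] ℝ) (b : E3),
      ((L₁ + L₂).smulRight b : E3 →L[ℝ] E3) = L₁.smulRight b + L₂.smulRight b := by
    intro L₁ L₂ b
    ext v
    simp [add_smul, add_mul]
  -- individual traces
  have trH : LinearMap.trace ℝ E3 (H : E3 →ₗ[ℝ] E3) = 0 := hharm x hx
  have trHH : LinearMap.trace ℝ E3 ((H.comp H : E3 →L[ℝ] E3) : E3 →ₗ[ℝ] E3)
      = frobSq (hess u x) := by
    rw [traceCLM_eq, frobSq]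
    refine Finset.sum_congr rfl fun i _ => ?_
    rw [ContinuousLinearMap.comp_apply, hsymm x hx, real_inner_self_eq_norm_sq]
    rfl
  have trTg : LinearMap.trace ℝ E3 ((T (g x) : E3 →L[ℝ] E3) : E3 →ₗ[ℝ] E3) = 0 := by
    set ℓ : (E3 →L[ℝ] E3) →L[ℝ] ℝ :=
      LinearMap.toContinuousLinearMap
        ((LinearMap.trace ℝ E3).comp (ContinuousLinearMap.coeLM ℝ)) with hℓ_def
    have hℓap : ∀ A : E3 →L[ℝ] E3, ℓ A = LinearMap.trace ℝ E3 (A : E3 →ₗ[ℝ] E3) := fun A => rfl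
    have h0 : (fun y => ℓ (fderiv ℝ g y)) =ᶠ[nhds x] fun _ => (0 : ℝ) := by
      filter_upwards [hΩx] with y hy
      exact hharm y hy
    have hcomp : HasFDerivAt (fun y => ℓ (fderiv ℝ g y)) (ℓ.comp T) x :=
      ℓ.hasFDerivAt.comp x hTd
    have hconst : HasFDerivAt (fun _ : E3 => (0 : ℝ)) (ℓ.comp T) x :=
      hcomp.congr_of_eventuallyEq h0.symm
    have hz : ℓ.comp T = 0 := hconst.unique (hasFDerivAt_const 0 x)
    have : ℓ (T (g x)) = 0 := by
      have h5 := ContinuousLinearMap.ext_iff.mp hz (g x)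
      simpa using h5
    rw [← hℓap]
    exact this
  have trT : LinearMap.trace ℝ E3 ((T.flip (g x) : E3 →L[ℝ] E3) : E3 →ₗ[ℝ] E3) = 0 := by
    rw [traceCLM_eq]
    have he : ∀ i : Fin 3,
        ⟪(T.flip (g x)) (EuclideanSpace.basisFun (Fin 3) ℝ i),
            EuclideanSpace.basisFun (Fin 3) ℝ i⟫
          = ⟪(T (g x)) (EuclideanSpace.basisFun (Fin 3) ℝ i),
              EuclideanSpace.basisFun (Fin 3) ℝ i⟫ := by
      intro i
      rw [ContinuousLinearMap.flip_apply, hTsymm]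
    rw [Finset.sum_congr rfl fun i _ => he i, ← traceCLM_eq]
    exact trTg
  -- put everything together
  rw [show vdiv X x = LinearMap.trace ℝ E3 ((fderiv ℝ X x : E3 →L[ℝ] E3) : E3 →ₗ[ℝ] E3) from rfl,
    hDX]
  simp only [sm1, sm2, tradd, trsmul, trace_smulRight_toDual, trH, trHH, trT]
  rw [hGf, hHgx]
  rw [real_inner_smul_right, real_inner_self_eq_norm_sq, real_inner_self_eq_norm_sq,
    real_inner_comm Gf (g x)]
  have hfxv : f x = ‖g x‖ := rfl
  rw [hfxv]
  have hnx : ‖g x‖ ≠ 0 := hfx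
  field_simp
  ring
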